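/- Let a ∈ ℝ with −1 < a < 0. Then D_a(x) ≠ 0 for every x > 0, the function x ↦ R_a(x) is strictly decreasing on (0, ∞), R_a(1) = 1, R_a(x) → +∞ as x → 0⁺, and R_a(x) → −∞ as x → +∞. -/

import Mathlib

/-!
Differentiating, `R_a' x = 6 x (x³ - 1)² (a (1 + a) x³ - (3 - a)(5 - a)) / D_a(x)²`. For
`-1 ≤ a ≤ 0` the last factor is negative, so `R_a' < 0` on `(0, ∞)` away from `x = 1`, which
forces strict decrease. Near `0⁺`, `R_a x = x⁻² · g(x)` with `g` continuous and `g 0 > 0`; near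
`+∞`, `R_a x = x · h(x⁻¹)` with `h` continuous and `h 0 = 2a / (3(1 + a)) < 0`.
-/

/-- The real restriction of the rational map `R_a` to the real line. -/
noncomputable def RaR (a x : ℝ) : ℝ :=
  (2*a*x^6 + (15 - a)*x^3 + (3 - a)) / (3*x^2*(5 - a + (1 + a)*x^3))

open Set Filter Topology

theorem StrictAntiOn.Ioi_of_deriv_neg_of_ne {f : ℝ → ℝ} {b c : ℝ} (hbc : b < c)
    (hf : ContinuousOn f (Ioi b)) (hf' : ∀ x, b < x → x ≠ c → deriv f x < 0) :
    StrictAntiOn f (Ioi b) := by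
  rw [← Ioc_union_Ici_eq_Ioi hbc]
  refine StrictAntiOn.union ?_ ?_ (isGreatest_Ioc hbc) isLeast_Ici
  · refine strictAntiOn_of_deriv_neg (convex_Ioc b c) (hf.mono Ioc_subset_Ioi_self) ?_
    rw [interior_Ioc]
    exact fun x hx => hf' x hx.1 hx.2.ne
  · refine strictAntiOn_of_deriv_neg (convex_Ici c) (hf.mono (Ici_subset_Ioi.2 hbc)) ?_
    rw [interior_Ici]
    exact fun x hx => hf' x (hbc.trans hx) hx.ne'

theorem RaR_denom_pos {a x : ℝ} (ha1 : -1 ≤ a) (ha5 : a < 5) (hx : 0 < x) :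
    0 < 3*x^2*(5 - a + (1 + a)*x^3) := by
  have : 0 ≤ (1 + a) * x^3 := mul_nonneg (by linarith) (by positivity)
  have : 0 < 5 - a + (1 + a)*x^3 := by linarith
  positivity

theorem hasDerivAt_RaR (a : ℝ) {x : ℝ} (hden : 3*x^2*(5 - a + (1 + a)*x^3) ≠ 0) :
    HasDerivAt (RaR a)
      (6*x*(x^3 - 1)^2*(a*(1 + a)*x^3 - (3 - a)*(5 - a)) / (3*x^2*(5 - a + (1 + a)*x^3))^2) x := by
  have hN := (((hasDerivAt_pow 6 x).const_mul (2*a)).add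
    ((hasDerivAt_pow 3 x).const_mul (15 - a))).add_const (3 - a)
  have hD := ((hasDerivAt_pow 2 x).const_mul 3).mul
    (((hasDerivAt_pow 3 x).const_mul (1 + a)).const_add (5 - a))
  refine HasDerivAt.congr_deriv (f := RaR a) (hN.div hD hden) ?_
  simp only [Pi.add_apply]
  norm_num
  ring

theorem deriv_RaR_neg {a x : ℝ} (ha1 : -1 ≤ a) (ha0 : a ≤ 0) (hx : 0 < x) (hx1 : x ≠ 1) :
    deriv (RaR a) x < 0 := by
  have hden := RaR_denom_pos ha1 (by linarith) hx
  rw [(hasDerivAt_RaR a hden.ne').deriv]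
  have hcube : x^3 - 1 ≠ 0 := by
    rw [sub_ne_zero]
    exact fun h => hx1 ((pow_eq_one_iff_of_nonneg hx.le three_ne_zero).1 h)
  have hfactor : a*(1 + a)*x^3 - (3 - a)*(5 - a) < 0 := by
    have : a*(1 + a)*x^3 ≤ 0 := mul_nonpos_of_nonpos_of_nonneg
      (mul_nonpos_of_nonpos_of_nonneg ha0 (by linarith)) (by positivity)
    nlinarith
  have hpos : 0 < 6*x*(x^3 - 1)^2 := by positivity
  exact div_neg_of_neg_of_pos (mul_neg_of_pos_of_neg hpos hfactor) (by positivity)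

theorem strictAntiOn_RaR {a : ℝ} (ha1 : -1 ≤ a) (ha0 : a ≤ 0) :
    StrictAntiOn (RaR a) (Ioi 0) :=
  StrictAntiOn.Ioi_of_deriv_neg_of_ne zero_lt_one
    (fun x hx => (hasDerivAt_RaR a (RaR_denom_pos ha1 (by linarith) hx).ne').continuousAt
      |>.continuousWithinAt)
    (fun x hx hx1 => deriv_RaR_neg ha1 ha0 hx hx1)

theorem RaR_one (a : ℝ) : RaR a 1 = 1 := by
  norm_num [RaR]
  ring

theorem tendsto_RaR_nhdsGT_zero {a : ℝ} (ha : a < 3) :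
    Tendsto (RaR a) (𝓝[>] 0) atTop := by
  set g : ℝ → ℝ := fun x => (2*a*x^6 + (15 - a)*x^3 + (3 - a)) / (3*(5 - a + (1 + a)*x^3))
  have hg : Tendsto g (𝓝[>] 0) (𝓝 ((3 - a) / (3*(5 - a)))) := by
    refine tendsto_nhdsWithin_of_tendsto_nhds ?_
    have : ContinuousAt g 0 := by
      fun_prop (disch := norm_num; linarith)
    simpa [g] using this.tendsto
  have hinv : Tendsto (fun x : ℝ => x⁻¹ ^ 2) (𝓝[>] 0) atTop :=
    (tendsto_pow_atTop two_ne_zero).comp tendsto_inv_nhdsGT_zero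
  refine (hinv.atTop_mul_pos (by apply div_pos <;> linarith) hg).congr fun x => ?_
  simp only [RaR, g, div_eq_mul_inv, mul_inv, inv_pow]
  ring

theorem tendsto_RaR_atTop {a : ℝ} (ha1 : -1 < a) (ha0 : a < 0) :
    Tendsto (RaR a) atTop atBot := by
  set g : ℝ → ℝ := fun t => (2*a + (15 - a)*t^3 + (3 - a)*t^6) / (3*(1 + a) + 3*(5 - a)*t^3)
  have hg : Tendsto (fun x => g x⁻¹) atTop (𝓝 (2*a / (3*(1 + a)))) := by
    have : ContinuousAt g 0 := by
      fun_prop (disch := norm_num; linarith)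
    have h0 : Tendsto g (𝓝 0) (𝓝 (2*a / (3*(1 + a)))) := by simpa [g] using this.tendsto
    exact h0.comp tendsto_inv_atTop_zero
  refine (tendsto_id.atTop_mul_neg (div_neg_of_neg_of_pos (by linarith) (by linarith)) hg).congr' ?_
  filter_upwards [eventually_gt_atTop 0] with x hx
  simp only [RaR, g, id]
  field_simp
  ring

/-- For real `a ∈ (-1,0)`, the denominator of `R_a` does not vanish on `(0,∞)`,
`R_a` is strictly decreasing on `(0,∞)`, fixes `1`, tends to `+∞` at `0⁺` and to `-∞`
at `+∞`. -/
theorem stmt_17 (a : ℝ) (ha1 : -1 < a) (ha0 : a < 0) :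
    (∀ x : ℝ, 0 < x → 3*x^2*(5 - a + (1 + a)*x^3) ≠ 0) ∧
    StrictAntiOn (RaR a) (Set.Ioi 0) ∧
    RaR a 1 = 1 ∧
    Filter.Tendsto (RaR a) (nhdsWithin 0 (Set.Ioi 0)) Filter.atTop ∧
    Filter.Tendsto (RaR a) Filter.atTop Filter.atBot :=
  ⟨fun _ hx => (RaR_denom_pos ha1.le (by linarith) hx).ne', strictAntiOn_RaR ha1.le ha0.le,
    RaR_one a, tendsto_RaR_nhdsGT_zero (by linarith), tendsto_RaR_atTop ha1 ha0⟩
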